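/- Every planar binary tree t admits a unique decomposition t = t_l / (∥ ∨ t_r) with t_l, t_r planar binary trees; equivalently, the monoid (Y, /) is freely generated by the trees V(t) = ∥ ∨ t. -/

import Mathlib

/-- Planar binary trees: `leaf` is the tree with no internal vertex,
`node l r` is the grafting `l ∨ r` of two trees on a new root. -/
inductive PBT : Type
  | leaf : PBT
  | node : PBT → PBT → PBT
deriving DecidableEq

namespace PBT

/-- The order of a tree: its number of internal vertices. -/
def order : PBT → ℕ
  | leaf => 0
  | node l r => order l + order r + 1

/-- The product `over`: t/∥ = t, t/(sˡ ∨ sʳ) = (t/sˡ) ∨ sʳ. -/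
def overProd : PBT → PBT → PBT
  | t, leaf => t
  | t, node l r => node (overProd t l) r

/-- The product `under`: ∥\s = s, (tˡ ∨ tʳ)\s = tˡ ∨ (tʳ\s). -/
def under : PBT → PBT → PBT
  | leaf, s => s
  | node l r, s => node l (under r s)

end PBT

namespace PBTaux

open PBT

/-- The word evaluation map. -/
def F (L : List PBT) : PBT := (L.map fun u => PBT.node PBT.leaf u).foldr overProd PBT.leaf

@[simp] lemma F_nil : F [] = PBT.leaf := rfl

@[simp] lemma F_cons (u : PBT) (L : List PBT) :
    F (u :: L) = overProd (PBT.node PBT.leaf u) (F L) := rfl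

lemma F_append_singleton (L : List PBT) (b : PBT) :
    F (L ++ [b]) = PBT.node (F L) b := by
  induction L with
  | nil => rfl
  | cons u L ih => simp [F_cons, ih, overProd]

/-- The inverse map: reading off the word. -/
def G : PBT → List PBT
  | PBT.leaf => []
  | PBT.node a b => G a ++ [b]

lemma F_G (t : PBT) : F (G t) = t := by
  induction t with
  | leaf => rfl
  | node a b iha _ => simp [G, F_append_singleton, iha]

lemma G_F (L : List PBT) : G (F L) = L := by
  induction L using List.reverseRecOn with
  | nil => rfl
  | append_singleton L b ih => rw [F_append_singleton, G, ih]

end PBTaux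

open PBT in
/-- Every nontrivial planar binary tree admits a unique decomposition
t = t_l / (∥ ∨ t_r); equivalently, the monoid (Y, /) is freely generated by the
trees V(t) = ∥ ∨ t: every tree factors uniquely as a word in these generators. -/
theorem free_generation_over :
    (∀ t : PBT, t ≠ PBT.leaf →
      ∃! p : PBT × PBT, t = overProd p.1 (PBT.node PBT.leaf p.2)) ∧
    (∀ t : PBT, ∃! L : List PBT,
      t = (L.map fun u => PBT.node PBT.leaf u).foldr overProd PBT.leaf) := by
  constructor
  · intro t ht
    match t, ht with
    | PBT.node a b, _ =>
      refine ⟨(a, b), rfl, ?_⟩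
      rintro ⟨x, y⟩ h
      simp only [overProd] at h
      cases h
      rfl
  · intro t
    refine ⟨PBTaux.G t, (PBTaux.F_G t).symm, ?_⟩
    intro L hL
    have : PBTaux.F L = t := hL.symm
    rw [← this, PBTaux.G_F]
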